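/- Let μ ∈ ℝ, σ ≥ 0, and let V be a measure on ℝ with V({0}) = 0 and ∫_ℝ min(1, t²) dV(t) < ∞; let f be the associated Lévy exponent f(ξ) = iμξ − σ²ξ²/2 + ∫_ℝ (e^{iξt} − 1 − iξt·1_{|t|≤1}(t)) dV(t). Let 𝕋^d carry its normalized Haar probability measure λ, and let (φ_n)_{n∈ℕ} be a sequence of square-integrable real-valued functions on 𝕋^d with ‖φ_n‖_{L²(𝕋^d)} → 0 as n → ∞. Then ∫_{𝕋^d} f(φ_n(r)) dλ(r) → 0 as n → ∞. (Hence the characteristic functional φ ↦ exp(∫_{𝕋^d} f(φ(r)) dλ(r)) of any periodic Lévy white noise is continuous at the origin with respect to the L²(𝕋^d) norm.) -/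

import Mathlib

/-!
The Lévy exponent `f` is continuous with `f 0 = 0`, and since the Lévy kernel is bounded by
`2 (1 + ξ²) min 1 t²` it grows at most quadratically. Hence for every `ε > 0` there is `C` with
`‖f ξ‖ ≤ ε + C ξ²` for all `ξ`, so `‖∫ f ∘ φ‖ ≤ ε λ(𝕋^d) + C ‖φ‖₂²`, which is eventually small.
-/

open MeasureTheory Filter

/-- The Lévy exponent associated with the triplet `(μ, σ², V)` via the
Lévy–Khintchine representation. -/
noncomputable def levyExponent (μ σ : ℝ) (V : Measure ℝ) (ξ : ℝ) : ℂ :=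
  Complex.I * (μ : ℂ) * (ξ : ℂ) - (σ : ℂ) ^ 2 * (ξ : ℂ) ^ 2 / 2 +
    ∫ t, (Complex.exp (Complex.I * (ξ : ℂ) * (t : ℂ)) - 1 -
      Complex.I * (ξ : ℂ) * Set.indicator {s : ℝ | |s| ≤ 1} (fun s : ℝ => (s : ℂ)) t) ∂V

open Topology
open scoped ENNReal NNReal

section QuadraticGrowth

variable {E : Type*} [NormedAddCommGroup E] {g : ℝ → E}

lemma exists_enorm_le_add_mul_sq (hg : Tendsto g (𝓝 0) (𝓝 0)) {K : ℝ}
    (hK : ∀ ξ, ‖g ξ‖ ≤ K * (1 + ξ ^ 2)) {ε : ℝ≥0∞} (hε : 0 < ε) :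
    ∃ C : ℝ≥0, ∀ ξ, ‖g ξ‖ₑ ≤ ε + C * ‖ξ‖ₑ ^ 2 := by
  obtain ⟨δ, hδ, hsmall⟩ := Metric.eventually_nhds_iff.1 <|
    ENNReal.tendsto_nhds_zero.1 (tendsto_zero_iff_enorm_tendsto_zero.1 hg) ε hε
  have hK0 : 0 ≤ K := by simpa using (norm_nonneg _).trans (hK 0)
  refine ⟨(K * (δ⁻¹ ^ 2 + 1)).toNNReal, fun ξ => ?_⟩
  rcases lt_or_ge |ξ| δ with hξ | hξ
  · exact le_add_right (hsmall (by simpa using hξ))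
  refine le_add_left ?_
  have hlarge : ‖g ξ‖ ≤ K * (δ⁻¹ ^ 2 + 1) * ‖ξ‖ ^ 2 := by
    have : 1 ≤ δ⁻¹ ^ 2 * ξ ^ 2 := by
      rw [← sq_abs ξ, ← mul_pow]
      exact one_le_pow₀ ((one_le_inv_mul₀ hδ).2 hξ)
    calc ‖g ξ‖ ≤ K * (1 + ξ ^ 2) := hK ξ
      _ ≤ K * (δ⁻¹ ^ 2 * ξ ^ 2 + ξ ^ 2) := by gcongr
      _ = K * (δ⁻¹ ^ 2 + 1) * ‖ξ‖ ^ 2 := by rw [Real.norm_eq_abs, sq_abs]; ring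
  rw [← ofReal_norm, ← ofReal_norm, ← ENNReal.ofReal_pow (norm_nonneg _),
    ← ENNReal.ofReal.eq_1, ← ENNReal.ofReal_mul (by positivity)]
  exact ENNReal.ofReal_le_ofReal hlarge

variable [NormedSpace ℝ E] {Ω : Type*} [MeasurableSpace Ω] {P : Measure Ω}

lemma enorm_integral_comp_le {ε : ℝ≥0∞} {C : ℝ≥0} (hC : ∀ ξ, ‖g ξ‖ₑ ≤ ε + C * ‖ξ‖ₑ ^ 2)
    (φ : Ω → ℝ) : ‖∫ r, g (φ r) ∂P‖ₑ ≤ ε * P Set.univ + C * eLpNorm φ 2 P ^ 2 :=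
  calc ‖∫ r, g (φ r) ∂P‖ₑ ≤ ∫⁻ r, ‖g (φ r)‖ₑ ∂P := enorm_integral_le_lintegral_enorm _
    _ ≤ ∫⁻ r, ε + C * ‖φ r‖ₑ ^ 2 ∂P := lintegral_mono fun r => hC (φ r)
    _ = ε * P Set.univ + C * eLpNorm φ 2 P ^ 2 := by
      rw [lintegral_add_left measurable_const, lintegral_const,
        lintegral_const_mul' _ _ ENNReal.coe_ne_top]
      congr
      simpa using (eLpNorm_nnreal_pow_eq_lintegral (f := φ) (μ := P) (p := 2) two_ne_zero).symm

lemma tendsto_integral_comp_of_tendsto_eLpNorm [IsFiniteMeasure P]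
    (hg : Tendsto g (𝓝 0) (𝓝 0)) {K : ℝ} (hK : ∀ ξ, ‖g ξ‖ ≤ K * (1 + ξ ^ 2))
    {ι : Type*} {l : Filter ι} {φ : ι → Ω → ℝ}
    (hφ : Tendsto (fun i => eLpNorm (φ i) 2 P) l (𝓝 0)) :
    Tendsto (fun i => ∫ r, g (φ i r) ∂P) l (𝓝 0) := by
  rw [tendsto_zero_iff_enorm_tendsto_zero, ENNReal.tendsto_nhds_zero]
  intro δ hδ
  obtain ⟨ε, hε, hεδ⟩ := ENNReal.exists_pos_mul_lt (measure_ne_top P Set.univ) hδ.ne'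
  obtain ⟨C, hC⟩ := exists_enorm_le_add_mul_sq hg hK hε
  have hbound : Tendsto (fun i => ε * P Set.univ + C * eLpNorm (φ i) 2 P ^ 2) l
      (𝓝 (ε * P Set.univ)) := by
    simpa using tendsto_const_nhds.add
      (ENNReal.Tendsto.const_mul (ENNReal.continuous_pow 2 |>.tendsto 0 |>.comp hφ)
        (Or.inr ENNReal.coe_ne_top))
  filter_upwards [hbound.eventually (gt_mem_nhds hεδ)] with i hi
  exact (enorm_integral_comp_le hC (φ i)).trans hi.le

end QuadraticGrowth

lemma norm_exp_I_mul_ofReal_sub_one_sub_le (x : ℝ) :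
    ‖Complex.exp (Complex.I * x) - 1 - Complex.I * x‖ ≤ 2 * x ^ 2 := by
  rcases le_or_gt |x| 1 with hx | hx
  · have hIx : ‖Complex.I * x‖ = |x| := by simp
    calc _ ≤ ‖Complex.I * x‖ ^ 2 := Complex.norm_exp_sub_one_sub_id_le (hIx.trans_le hx)
      _ ≤ 2 * x ^ 2 := by rw [hIx, sq_abs]; nlinarith [sq_nonneg x]
  · calc _ ≤ ‖Complex.exp (Complex.I * x) - 1‖ + ‖Complex.I * x‖ := norm_sub_le _ _
      _ ≤ |x| + |x| := by
        gcongr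
        · exact Real.norm_exp_I_mul_ofReal_sub_one_le
        · simp
      _ ≤ 2 * x ^ 2 := by nlinarith [sq_abs x]

noncomputable def levyKernel (ξ t : ℝ) : ℂ :=
  Complex.exp (Complex.I * ξ * t) - 1 -
    Complex.I * ξ * Set.indicator {s : ℝ | |s| ≤ 1} (fun s : ℝ => (s : ℂ)) t

lemma levyExponent_eq (μ σ : ℝ) (V : Measure ℝ) (ξ : ℝ) :
    levyExponent μ σ V ξ =
      Complex.I * μ * ξ - (σ : ℂ) ^ 2 * (ξ : ℂ) ^ 2 / 2 + ∫ t, levyKernel ξ t ∂V :=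
  rfl

lemma levyExponent_zero (μ σ : ℝ) (V : Measure ℝ) : levyExponent μ σ V 0 = 0 := by
  simp [levyExponent]

lemma norm_levyKernel_le (ξ t : ℝ) : ‖levyKernel ξ t‖ ≤ 2 * (1 + ξ ^ 2) * min 1 (t ^ 2) := by
  rcases le_or_gt |t| 1 with ht | ht
  · have hmin : min 1 (t ^ 2) = t ^ 2 := min_eq_right (by nlinarith [sq_abs t, abs_nonneg t])
    have hker : levyKernel ξ t =
        Complex.exp (Complex.I * ↑(ξ * t)) - 1 - Complex.I * ↑(ξ * t) := by
      rw [levyKernel, Set.indicator_of_mem (by exact ht)]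
      push_cast
      ring_nf
    rw [hker, hmin]
    calc _ ≤ 2 * (ξ * t) ^ 2 := norm_exp_I_mul_ofReal_sub_one_sub_le (ξ * t)
      _ ≤ 2 * (1 + ξ ^ 2) * t ^ 2 := by nlinarith [sq_nonneg t]
  · have hmin : min 1 (t ^ 2) = 1 := min_eq_left (by nlinarith [sq_abs t, abs_nonneg t])
    rw [levyKernel, Set.indicator_of_notMem (by exact ht.not_ge), mul_zero, sub_zero, hmin]
    calc _ ≤ ‖Complex.exp (Complex.I * ξ * t)‖ + ‖(1 : ℂ)‖ := norm_sub_le _ _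
      _ = 2 := by norm_num [Complex.norm_exp]
      _ ≤ 2 * (1 + ξ ^ 2) * 1 := by nlinarith [sq_nonneg ξ]

lemma continuous_levyKernel_left (t : ℝ) : Continuous fun ξ => levyKernel ξ t := by
  unfold levyKernel
  fun_prop

lemma measurable_levyKernel (ξ : ℝ) : Measurable (levyKernel ξ) := by
  unfold levyKernel
  measurability

section LevyExponent

variable {V : Measure ℝ}

lemma continuous_levyExponent (hV : Integrable (fun t => min 1 (t ^ 2)) V) (μ σ : ℝ) :
    Continuous (levyExponent μ σ V) := by
  have hjump : Continuous fun ξ => ∫ t, levyKernel ξ t ∂V := by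
    refine continuous_iff_continuousAt.2 fun ξ₀ => continuousAt_of_dominated
      (bound := fun t => 2 * (1 + (|ξ₀| + 1) ^ 2) * min 1 (t ^ 2))
      (.of_forall fun ξ => (measurable_levyKernel ξ).aestronglyMeasurable) ?_
      (hV.const_mul _) (.of_forall fun t => (continuous_levyKernel_left t).continuousAt)
    filter_upwards [(continuous_abs.tendsto ξ₀).eventually (gt_mem_nhds (lt_add_one |ξ₀|))]
      with ξ hξ
    refine .of_forall fun t => (norm_levyKernel_le ξ t).trans ?_
    have hξsq : ξ ^ 2 ≤ (|ξ₀| + 1) ^ 2 := by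
      rw [← sq_abs ξ]; exact pow_le_pow_left₀ (abs_nonneg ξ) hξ.le 2
    gcongr
  simp only [funext (levyExponent_eq μ σ V)]
  fun_prop

lemma norm_levyExponent_le (hV : Integrable (fun t => min 1 (t ^ 2)) V) (μ σ ξ : ℝ) :
    ‖levyExponent μ σ V ξ‖ ≤ (|μ| + σ ^ 2 + 2 * ∫ t, min 1 (t ^ 2) ∂V) * (1 + ξ ^ 2) := by
  have hjump : ‖∫ t, levyKernel ξ t ∂V‖ ≤ 2 * (1 + ξ ^ 2) * ∫ t, min 1 (t ^ 2) ∂V := by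
    rw [← integral_const_mul]
    exact norm_integral_le_of_norm_le (hV.const_mul _) (.of_forall (norm_levyKernel_le ξ))
  have hM : 0 ≤ ∫ t, min 1 (t ^ 2) ∂V := integral_nonneg fun t => le_min zero_le_one (sq_nonneg t)
  have hdrift : ‖Complex.I * μ * ξ‖ = |μ| * |ξ| := by simp
  have hdiff : ‖(σ : ℂ) ^ 2 * (ξ : ℂ) ^ 2 / 2‖ = σ ^ 2 * ξ ^ 2 / 2 := by
    simp [sq_abs]
  calc ‖levyExponent μ σ V ξ‖
      ≤ ‖Complex.I * μ * ξ‖ + ‖(σ : ℂ) ^ 2 * (ξ : ℂ) ^ 2 / 2‖ + ‖∫ t, levyKernel ξ t ∂V‖ := by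
        rw [levyExponent_eq]
        exact (norm_add_le _ _).trans (by gcongr; exact norm_sub_le _ _)
    _ ≤ _ := by
        rw [hdrift, hdiff]
        nlinarith [abs_nonneg μ, abs_nonneg ξ, sq_abs ξ, sq_nonneg (|ξ| - 1), sq_nonneg σ]

end LevyExponent

theorem stmt10_general (d : ℕ) (μ σ : ℝ) (V : Measure ℝ)
    (hV : ∫⁻ t, ENNReal.ofReal (min 1 (t ^ 2)) ∂V < ⊤)
    (φ : ℕ → (Fin d → AddCircle (1 : ℝ)) → ℝ)
    (hlim : Tendsto (fun n => eLpNorm (φ n) 2 volume) atTop (nhds 0)) :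
    Tendsto (fun n => ∫ r, levyExponent μ σ V (φ n r) ∂volume) atTop (nhds 0) := by
  have hV' : Integrable (fun t => min 1 (t ^ 2)) V :=
    ⟨by fun_prop, (hasFiniteIntegral_iff_ofReal <|
      .of_forall fun t => le_min zero_le_one (sq_nonneg t)).2 hV⟩
  exact tendsto_integral_comp_of_tendsto_eLpNorm
    ((continuous_levyExponent hV' μ σ).tendsto' 0 0 (levyExponent_zero μ σ V))
    (norm_levyExponent_le hV' μ σ) hlim

theorem stmt10 (d : ℕ) (hd : 1 ≤ d) (μ σ : ℝ) (hσ : 0 ≤ σ) (V : Measure ℝ)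
    (hV0 : V {0} = 0) (hV : ∫⁻ t, ENNReal.ofReal (min 1 (t ^ 2)) ∂V < ⊤)
    (φ : ℕ → (Fin d → AddCircle (1 : ℝ)) → ℝ) (hφ : ∀ n, MemLp (φ n) 2 volume)
    (hlim : Tendsto (fun n => eLpNorm (φ n) 2 volume) atTop (nhds 0)) :
    Tendsto (fun n => ∫ r, levyExponent μ σ V (φ n r) ∂volume) atTop (nhds 0) :=
  stmt10_general d μ σ V hV φ hlim
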